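/- arXiv:1610.00238 — 2 statements merged into one kernel-verified Lean document; each statement's English description precedes it below -/
import Mathlib

section
/- Let m ≥ 2, n ≥ 2, and let f be a maximal IC-coloring of K_{1(n),m} with vertices listed as u_1, …, u_{m+n} so that f(u_i) < f(u_{i+1}) for all i; set f_i = f(u_1) + ⋯ + f(u_i). Then for every pair (i, j) with 1 ≤ i < j ≤ m+n, f_j ≤ 2^{j−i}(f_i + 1) − 1. -/
/-- The join `H₀ ∨ H₁` of two graphs: all edges of `H₀`, all edges of `H₁`, and all
pairs with one endpoint in each. -/
def graphJoin {α β : Type*} (G : SimpleGraph α) (H : SimpleGraph β) :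
    SimpleGraph (α ⊕ β) where
  Adj x y :=
    match x, y with
    | Sum.inl a, Sum.inl b => G.Adj a b
    | Sum.inr a, Sum.inr b => H.Adj a b
    | Sum.inl _, Sum.inr _ => True
    | Sum.inr _, Sum.inl _ => True
  symm := by
    constructor
    rintro (a | a) (b | b) h
    · exact G.adj_symm h
    · trivial
    · trivial
    · exact H.adj_symm h
  loopless := by
    constructor
    rintro (a | a) h
    · exact G.irrefl h
    · exact H.irrefl h

/-- A coloring `f : V(G) → ℕ` (positive-valued) is an IC-coloring if every integer
`k` with `1 ≤ k ≤ f(G)` is the `f`-sum of some nonempty vertex subset inducing a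
connected subgraph. -/
def IsICColoring {α : Type*} [Fintype α] (G : SimpleGraph α) (f : α → ℕ) : Prop :=
  (∀ v, 0 < f v) ∧
    ∀ k : ℕ, 1 ≤ k → k ≤ ∑ v, f v →
      ∃ S : Finset α, S.Nonempty ∧ (G.induce (S : Set α)).Connected ∧
        ∑ v ∈ S, f v = k

/-- The IC-index `M(G)`: the maximum of `f(G)` over all IC-colorings `f` of `G`. -/
noncomputable def ICIndex {α : Type*} [Fintype α] (G : SimpleGraph α) : ℕ :=
  sSup {t | ∃ f : α → ℕ, IsICColoring G f ∧ ∑ v, f v = t}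

/-- `K_{1(n),m} = O_m ∨ K_n`: the complete `(n+1)`-partite graph with `n` parts of
size one and one part (`V₀ = Fin m`, the left summand) of size `m`. -/
def K1nm (m n : ℕ) : SimpleGraph (Fin m ⊕ Fin n) :=
  graphJoin (⊥ : SimpleGraph (Fin m)) (⊤ : SimpleGraph (Fin n))

/-!
In an IC-coloring every value `k ≤ f(G)` is a vertex sum, so for any vertex set `T` of sum
`f(T) < f(G)` the value `f(T) + 1` is realised by a set that cannot lie inside `T`; hence some vertex
outside `T` has colour at most `f(T) + 1`. Applied to the `i` smallest colours this gives
`f(u_{i+1}) ≤ f_i + 1`, i.e. `f_{i+1} + 1 ≤ 2 (f_i + 1)`, and iterating yields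
`f_j + 1 ≤ 2^{j-i} (f_i + 1)`.
-/

theorem Nat.le_pow_sub_mul_of_succ_le_mul {g : ℕ → ℕ} {c i j : ℕ} (hij : i ≤ j)
    (h : ∀ k, i ≤ k → k < j → g (k + 1) ≤ c * g k) : g j ≤ c ^ (j - i) * g i := by
  induction j, hij using Nat.le_induction with
  | base => simp
  | succ j hij ih =>
    calc g (j + 1) ≤ c * g j := h j hij j.lt_succ_self
      _ ≤ c * (c ^ (j - i) * g i) := Nat.mul_le_mul_left c (ih fun k hik hkj => h k hik (by omega))
      _ = c ^ (j + 1 - i) * g i := by rw [Nat.sub_add_comm hij, pow_succ']; ring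

theorem IsICColoring.exists_notMem_le_sum_add_one {α : Type*} [Fintype α] {G : SimpleGraph α}
    {f : α → ℕ} (hf : IsICColoring G f) {T : Finset α} (hT : ∑ v ∈ T, f v < ∑ v, f v) :
    ∃ v ∉ T, f v ≤ ∑ v ∈ T, f v + 1 := by
  obtain ⟨S, -, -, hS⟩ := hf.2 (∑ v ∈ T, f v + 1) le_add_self hT
  have hST : ¬ S ⊆ T := fun hST => by
    have := Finset.sum_le_sum_of_subset (f := f) hST
    omega
  obtain ⟨v, hvS, hvT⟩ := Finset.not_subset.1 hST
  exact ⟨v, hvT, hS ▸ Finset.single_le_sum (fun _ _ => Nat.zero_le _) hvS⟩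

section Enumeration

variable {α : Type*} [Fintype α] {f : α → ℕ} {u : ℕ → α} {N : ℕ}

theorem sum_Icc_comp_eq_sum_univ_of_bijOn (hu : Set.BijOn u (Set.Icc 1 N) Set.univ) :
    ∑ k ∈ Finset.Icc 1 N, f (u k) = ∑ v, f v :=
  Finset.sum_nbij u (fun _ _ => Finset.mem_univ _) (by simpa using hu.injOn)
    (by simpa using hu.surjOn) fun _ _ => rfl

theorem IsICColoring.apply_succ_le_sum_Icc_add_one {G : SimpleGraph α} (hf : IsICColoring G f)
    (hu : Set.BijOn u (Set.Icc 1 N) Set.univ) (hmono : MonotoneOn (f ∘ u) (Set.Icc 1 N))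
    {i : ℕ} (hiN : i < N) :
    f (u (i + 1)) ≤ ∑ k ∈ Finset.Icc 1 i, f (u k) + 1 := by
  classical
  have hinj : Set.InjOn u (Finset.Icc 1 i) :=
    hu.injOn.mono (by simpa using Set.Icc_subset_Icc_right hiN.le)
  have hsumT : ∑ v ∈ (Finset.Icc 1 i).image u, f v = ∑ k ∈ Finset.Icc 1 i, f (u k) :=
    Finset.sum_image hinj
  have hlt : ∑ k ∈ Finset.Icc 1 i, f (u k) < ∑ v, f v := by
    rw [← sum_Icc_comp_eq_sum_univ_of_bijOn hu]
    exact Finset.sum_lt_sum_of_subset (Finset.Icc_subset_Icc_right hiN.le)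
      (i := N) (Finset.mem_Icc.2 ⟨by omega, le_rfl⟩)
      (fun h => (Finset.mem_Icc.1 h).2.not_gt hiN) (hf.1 _) fun _ _ _ => Nat.zero_le _
  obtain ⟨v, hvT, hv⟩ := hf.exists_notMem_le_sum_add_one (T := (Finset.Icc 1 i).image u)
    (by rwa [hsumT])
  obtain ⟨t, ht, rfl⟩ := hu.surjOn (Set.mem_univ v)
  have hit : i < t := by
    by_contra! hti
    exact hvT (Finset.mem_image_of_mem u (Finset.mem_Icc.2 ⟨ht.1, hti⟩))
  calc f (u (i + 1)) ≤ f (u t) := hmono ⟨by omega, by omega⟩ ht hit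
    _ ≤ _ := hsumT ▸ hv

end Enumeration

theorem stmt_11_general (m n : ℕ)
    (f : Fin m ⊕ Fin n → ℕ) (hf : IsICColoring (K1nm m n) f)
    (u : ℕ → Fin m ⊕ Fin n) (hu : Set.BijOn u (Set.Icc 1 (m + n)) Set.univ)
    (hmono : ∀ i, 1 ≤ i → i + 1 ≤ m + n → f (u i) < f (u (i + 1))) :
    ∀ i j, 1 ≤ i → i < j → j ≤ m + n →
      ∑ k ∈ Finset.Icc 1 j, f (u k) ≤
        2 ^ (j - i) * ((∑ k ∈ Finset.Icc 1 i, f (u k)) + 1) - 1 := by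
  intro i j _ hij hj
  have hmono' : MonotoneOn (f ∘ u) (Set.Icc 1 (m + n)) :=
    monotoneOn_of_le_succ Set.ordConnected_Icc fun a _ ha hsa => (hmono a ha.1 hsa.2).le
  have hgrowth : ∑ k ∈ Finset.Icc 1 j, f (u k) + 1 ≤
      2 ^ (j - i) * (∑ k ∈ Finset.Icc 1 i, f (u k) + 1) := by
    refine Nat.le_pow_sub_mul_of_succ_le_mul (g := fun l => ∑ k ∈ Finset.Icc 1 l, f (u k) + 1)
      hij.le fun k _ hkj => ?_
    have := hf.apply_succ_le_sum_Icc_add_one hu hmono' (by omega : k < m + n)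
    simp only [Finset.sum_Icc_succ_top (by omega : 1 ≤ k + 1)]
    omega
  omega

/-- Let `m, n ≥ 2` and `f` a maximal IC-coloring of `K_{1(n),m}`,
with vertices listed as `u 1, …, u (m+n)` so that `f` is strictly increasing along
the list; write `fᵢ = ∑_{k=1}^{i} f (u k)`.  Then `f_j ≤ 2^{j−i}(fᵢ + 1) − 1` for
all `1 ≤ i < j ≤ m + n`. -/
theorem stmt_11 (m n : ℕ) (hm : 2 ≤ m) (hn : 2 ≤ n)
    (f : Fin m ⊕ Fin n → ℕ) (hf : IsICColoring (K1nm m n) f)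
    (hmax : ∑ v, f v = ICIndex (K1nm m n))
    (u : ℕ → Fin m ⊕ Fin n) (hu : Set.BijOn u (Set.Icc 1 (m + n)) Set.univ)
    (hmono : ∀ i, 1 ≤ i → i + 1 ≤ m + n → f (u i) < f (u (i + 1))) :
    ∀ i j, 1 ≤ i → i < j → j ≤ m + n →
      ∑ k ∈ Finset.Icc 1 j, f (u k) ≤
        2 ^ (j - i) * ((∑ k ∈ Finset.Icc 1 i, f (u k)) + 1) - 1 :=
  stmt_11_general m n f hf u hu hmono
end

section
/- Let m ≥ 2, n ≥ 2, and let f be a maximal IC-coloring of K_{1(n),m} with vertices listed as u_1, …, u_{m+n} so that f(u_i) < f(u_{i+1}) for all i. Set s_0 = 0, s_i = f(u_i), and r_i = s_i − ∑_{j=0}^{i−1} s_j for 1 ≤ i ≤ m+n, and let k_0 = max{ j : u_j ∈ V_0 }. If r_i ≤ 0 for every index i with u_i ∈ V_0 \ {u_{k_0}}, then f(K_{1(n),m}) ≤ 2^{m+n} − 2^m + 1. -/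
/-! List the colors increasingly as `s₁ < ⋯ < s_N` and put `Pᵢ = s₁ + ⋯ + s_{i-1}`. An
IC-coloring has `sᵢ ≤ Pᵢ + 1`, since otherwise `Pᵢ + 1` is not a subset sum at all; so every
`rᵢ = sᵢ - Pᵢ` is at most `1`. From `P_{i+1} = 2 Pᵢ + rᵢ` the total is `∑ 2^(N-i) rᵢ`, which is
at most `2^N - 1 - ∑_{i ∈ A} 2^(N-i)` for the set `A` of the `m - 1` indices of `V₀` other than
`k₀`, where `rᵢ ≤ 0`. These indices lie below `k₀ ≤ N`, so the `2^(N-i)`, `i ∈ A`, are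
distinct powers of two at least `2`, and their sum is at least `2^m - 2`. -/

open Finset

theorem IsICColoring.le_sum_lt_add_one {α : Type*} [Fintype α] {G : SimpleGraph α}
    {f : α → ℕ} (hf : IsICColoring G f) (x : α) : f x ≤ ∑ v with f v < f x, f v + 1 := by
  by_contra! hlt
  set T := ∑ v with f v < f x, f v
  have hx : f x ≤ ∑ v, f v := single_le_sum (fun _ _ => Nat.zero_le _) (mem_univ x)
  obtain ⟨S, -, -, hS⟩ := hf.2 (T + 1) (by omega) (by omega)
  by_cases hsmall : ∀ v ∈ S, f v < f x
  · have : ∑ v ∈ S, f v ≤ T :=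
      sum_le_sum_of_subset (fun v hv => mem_filter.2 ⟨mem_univ v, hsmall v hv⟩)
    omega
  · push Not at hsmall
    obtain ⟨v, hv, hxv⟩ := hsmall
    have : f v ≤ ∑ v ∈ S, f v := single_le_sum (fun _ _ => Nat.zero_le _) hv
    omega

theorem sum_comp_eq_sum_univ_of_bijOn {ι κ M : Type*} [Fintype κ] [AddCommMonoid M]
    {s : Finset ι} {u : ι → κ} (hu : Set.BijOn u s Set.univ) (g : κ → M) :
    ∑ j ∈ s, g (u j) = ∑ v, g v :=
  sum_nbij u (fun _ _ => mem_univ _) hu.injOn (by simpa using hu.surjOn) fun _ _ => rfl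

theorem sum_filter_lt_apply_eq_sum_Ico {ι M : Type*} [Fintype ι] [AddCommMonoid M]
    [LinearOrder M] {f : ι → M} {u : ℕ → ι} {N i : ℕ}
    (hu : Set.BijOn u (Set.Icc 1 N) Set.univ) (hmono : StrictMonoOn (f ∘ u) (Set.Icc 1 N))
    (hi : i ∈ Set.Icc 1 N) : ∑ v with f v < f (u i), f v = ∑ j ∈ Ico 1 i, f (u j) := by
  rw [sum_filter, ← sum_comp_eq_sum_univ_of_bijOn (s := Icc 1 N) (by rwa [coe_Icc]),
    ← sum_filter]
  refine sum_congr (ext fun j => ?_) fun _ _ => rfl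
  simp only [mem_filter, mem_Icc, mem_Ico]
  constructor
  · rintro ⟨hj, hlt⟩
    exact ⟨hj.1, (hmono.lt_iff_lt hj hi).1 hlt⟩
  · rintro ⟨hj, hji⟩
    exact ⟨⟨hj, hji.le.trans hi.2⟩, (hmono.lt_iff_lt ⟨hj, hji.le.trans hi.2⟩ hi).2 hji⟩

theorem IsICColoring.le_sum_Ico_add_one {α : Type*} [Fintype α] {G : SimpleGraph α}
    {f : α → ℕ} (hf : IsICColoring G f) {u : ℕ → α} {N i : ℕ}
    (hu : Set.BijOn u (Set.Icc 1 N) Set.univ) (hmono : StrictMonoOn (f ∘ u) (Set.Icc 1 N))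
    (hi : i ∈ Set.Icc 1 N) : f (u i) ≤ ∑ j ∈ Ico 1 i, f (u j) + 1 :=
  sum_filter_lt_apply_eq_sum_Ico hu hmono hi ▸ hf.le_sum_lt_add_one (u i)

theorem card_filter_comp_eq_of_bijOn {ι κ : Type*} [Fintype κ] {s : Finset ι} {u : ι → κ}
    (hu : Set.BijOn u s Set.univ) (p : κ → Prop) [DecidablePred p] :
    #{i ∈ s | p (u i)} = #{v | p v} := by
  simpa only [card_filter] using sum_comp_eq_sum_univ_of_bijOn hu fun v => if p v then 1 else 0

theorem card_filter_isLeft (α β : Type*) [Fintype α] [Fintype β] :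
    #{v : α ⊕ β | v.isLeft} = Fintype.card α := by
  have : ({v : α ⊕ β | v.isLeft} : Finset _) = univ.map Function.Embedding.inl := by
    ext v
    cases v <;> simp
  rw [this, card_map, card_univ]

theorem sum_range_succ_eq_two_pow_mul_add_sum {R : Type*} [CommRing R] {s r : ℕ → R} {t : ℕ}
    (hr : ∀ i ∈ Icc 1 t, r i = s i - ∑ j ∈ range i, s j) :
    ∑ j ∈ range (t + 1), s j = 2 ^ t * s 0 + ∑ i ∈ Icc 1 t, 2 ^ (t - i) * r i := by
  induction t with
  | zero => simp
  | succ t ih =>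
    have hr' : ∀ i ∈ Icc 1 t, r i = s i - ∑ j ∈ range i, s j :=
      fun i hi => hr i (Icc_subset_Icc_right t.le_succ hi)
    have hdouble : ∑ i ∈ Icc 1 t, (2 : R) ^ (t + 1 - i) * r i
        = 2 * ∑ i ∈ Icc 1 t, 2 ^ (t - i) * r i := by
      rw [mul_sum]
      refine sum_congr rfl fun i hi => ?_
      rw [Nat.sub_add_comm (mem_Icc.1 hi).2, pow_succ]
      ring
    rw [sum_range_succ, sum_Icc_succ_top le_add_self, hdouble, Nat.sub_self,
      hr (t + 1) (right_mem_Icc.2 le_add_self), ih hr']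
    ring

theorem sum_Icc_two_pow_sub (N : ℕ) : ∑ i ∈ Icc 1 N, (2 : ℤ) ^ (N - i) = 2 ^ N - 1 := by
  rw [← Finset.Ico_add_one_right_eq_Icc, sum_Ico_reflect _ _ le_rfl, Nat.sub_self,
    Nat.add_sub_cancel, ← range_eq_Ico]
  simpa using geom_sum_mul (2 : ℤ) N

theorem sum_mul_le_sum_sub_sum {ι R : Type*} [DecidableEq ι] [Ring R] [PartialOrder R]
    [IsOrderedRing R] {I A : Finset ι} (hA : A ⊆ I) {w r : ι → R} (hw : ∀ i ∈ I, 0 ≤ w i)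
    (hr1 : ∀ i ∈ I, r i ≤ 1) (hr0 : ∀ i ∈ A, r i ≤ 0) :
    ∑ i ∈ I, w i * r i ≤ ∑ i ∈ I, w i - ∑ i ∈ A, w i := by
  rw [← sum_sdiff hA, ← sum_sdiff hA (f := w), add_sub_cancel_right]
  have hout : ∑ i ∈ I \ A, w i * r i ≤ ∑ i ∈ I \ A, w i := sum_le_sum fun i hi =>
    have hi := (mem_sdiff.1 hi).1
    mul_le_of_le_one_right (hw i hi) (hr1 i hi)
  have hin : ∑ i ∈ A, w i * r i ≤ 0 := sum_nonpos fun i hi =>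
    mul_nonpos_of_nonneg_of_nonpos (hw i (hA hi)) (hr0 i hi)
  exact add_le_of_le_of_nonpos hout hin

theorem two_pow_card_add_one_le_sum_two_pow_sub {A : Finset ℕ} {N : ℕ} (hA : ∀ i ∈ A, i < N) :
    2 ^ (#A + 1) ≤ ∑ i ∈ A, 2 ^ (N - i) + 2 := by
  induction A using Finset.induction_on_min with
  | empty => simp
  | insert a A hmin ih =>
    have haA : a ∉ A := fun h => lt_irrefl a (hmin a h)
    have hcard : #A + 1 ≤ N - a := by
      have : A ⊆ Ioo a N := fun i hi => mem_Ioo.2 ⟨hmin i hi, hA i (mem_insert_of_mem hi)⟩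
      have := card_le_card this
      simp only [Nat.card_Ioo] at this
      have := hA a (mem_insert_self a A)
      omega
    have hpow : 2 ^ (#A + 1) ≤ 2 ^ (N - a) := Nat.pow_le_pow_right (by norm_num) hcard
    have := ih fun i hi => hA i (mem_insert_of_mem hi)
    rw [card_insert_of_notMem haA, sum_insert haA, pow_succ]
    omega

theorem sum_range_succ_le_of_sub_sum_le {s r : ℕ → ℤ} {N : ℕ} {A : Finset ℕ} (hs0 : s 0 = 0)
    (hr : ∀ i ∈ Icc 1 N, r i = s i - ∑ j ∈ range i, s j) (hr1 : ∀ i ∈ Icc 1 N, r i ≤ 1)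
    (hA : A ⊆ Ico 1 N) (hrA : ∀ i ∈ A, r i ≤ 0) :
    ∑ j ∈ range (N + 1), s j ≤ 2 ^ N - 2 ^ (#A + 1) + 1 := by
  have hApow : (2 : ℤ) ^ (#A + 1) ≤ ∑ i ∈ A, 2 ^ (N - i) + 2 := by
    exact_mod_cast two_pow_card_add_one_le_sum_two_pow_sub fun i hi => (mem_Ico.1 (hA hi)).2
  calc ∑ j ∈ range (N + 1), s j = ∑ i ∈ Icc 1 N, 2 ^ (N - i) * r i := by
        rw [sum_range_succ_eq_two_pow_mul_add_sum hr, hs0, mul_zero, zero_add]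
    _ ≤ ∑ i ∈ Icc 1 N, 2 ^ (N - i) - ∑ i ∈ A, 2 ^ (N - i) :=
      sum_mul_le_sum_sub_sum (hA.trans Ico_subset_Icc_self) (fun _ _ => by positivity) hr1 hrA
    _ ≤ 2 ^ N - 2 ^ (#A + 1) + 1 := by rw [sum_Icc_two_pow_sub]; linarith

theorem stmt_14_general (m n : ℕ)
    (f : Fin m ⊕ Fin n → ℕ) (hf : IsICColoring (K1nm m n) f)
    (u : ℕ → Fin m ⊕ Fin n) (hu : Set.BijOn u (Set.Icc 1 (m + n)) Set.univ)
    (hmono : ∀ i, 1 ≤ i → i + 1 ≤ m + n → f (u i) < f (u (i + 1)))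
    (s r : ℕ → ℤ) (hs0 : s 0 = 0)
    (hs : ∀ i, 1 ≤ i → i ≤ m + n → s i = f (u i))
    (hr : ∀ i, 1 ≤ i → i ≤ m + n → r i = s i - ∑ j ∈ Finset.range i, s j)
    (k₀ : ℕ) (hk₀mem : 1 ≤ k₀ ∧ k₀ ≤ m + n ∧ (u k₀).isLeft = true)
    (hk₀max : ∀ j, 1 ≤ j → j ≤ m + n → (u j).isLeft = true → j ≤ k₀)
    (hneg : ∀ i, 1 ≤ i → i ≤ m + n → (u i).isLeft = true → i ≠ k₀ → r i ≤ 0) :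
    ∑ v, f v ≤ 2 ^ (m + n) - 2 ^ m + 1 := by
  set N := m + n
  have hu' : Set.BijOn u (Icc 1 N : Set ℕ) Set.univ := by rwa [coe_Icc]
  have hstrict : StrictMonoOn (f ∘ u) (Set.Icc 1 N) :=
    strictMonoOn_of_lt_add_one Set.ordConnected_Icc fun i _ hi hi' => hmono i hi.1 hi'.2
  have hprefix (i : ℕ) (hi : i ∈ Icc 1 (N + 1)) :
      ∑ j ∈ range i, s j = ∑ j ∈ Ico 1 i, (f (u j) : ℤ) := by
    obtain ⟨hi1, hiN⟩ := mem_Icc.1 hi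
    rw [range_eq_Ico, sum_eq_sum_Ico_succ_bot hi1, hs0, zero_add]
    exact sum_congr rfl fun j hj => hs j (mem_Ico.1 hj).1 (by have := (mem_Ico.1 hj).2; omega)
  have hr_le_one (i : ℕ) (hi : i ∈ Icc 1 N) : r i ≤ 1 := by
    obtain ⟨hi1, hiN⟩ := mem_Icc.1 hi
    have hle : (f (u i) : ℤ) ≤ ∑ j ∈ Ico 1 i, (f (u j) : ℤ) + 1 := by
      exact_mod_cast hf.le_sum_Ico_add_one hu hstrict ⟨hi1, hiN⟩
    rw [hr i hi1 hiN, hs i hi1 hiN, hprefix i (Icc_subset_Icc_right N.le_succ hi)]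
    linarith
  set A := {i ∈ Icc 1 N | (u i).isLeft}.erase k₀
  have hk₀ : k₀ ∈ {i ∈ Icc 1 N | (u i).isLeft} :=
    mem_filter.2 ⟨mem_Icc.2 ⟨hk₀mem.1, hk₀mem.2.1⟩, hk₀mem.2.2⟩
  have hAcard : #A + 1 = m := by
    rw [card_erase_add_one hk₀, card_filter_comp_eq_of_bijOn hu' (fun v => v.isLeft),
      card_filter_isLeft, Fintype.card_fin]
  have hmemA (i : ℕ) (hi : i ∈ A) : i ≠ k₀ ∧ (1 ≤ i ∧ i ≤ N) ∧ (u i).isLeft := by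
    simpa [A] using hi
  have hA : A ⊆ Ico 1 N := fun i hi => by
    obtain ⟨hne, ⟨hi1, hiN⟩, hleft⟩ := hmemA i hi
    have := hk₀max i hi1 hiN hleft
    exact mem_Ico.2 ⟨hi1, by omega⟩
  have hrA (i : ℕ) (hi : i ∈ A) : r i ≤ 0 := by
    obtain ⟨hne, ⟨hi1, hiN⟩, hleft⟩ := hmemA i hi
    exact hneg i hi1 hiN hleft hne
  have hbound := sum_range_succ_le_of_sub_sum_le hs0
    (fun i hi => hr i (mem_Icc.1 hi).1 (mem_Icc.1 hi).2) hr_le_one hA hrA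
  rw [hAcard, hprefix (N + 1) (right_mem_Icc.2 le_add_self), Ico_add_one_right_eq_Icc,
    sum_comp_eq_sum_univ_of_bijOn hu' fun v => (f v : ℤ)] at hbound
  have : 2 ^ m ≤ 2 ^ N := Nat.pow_le_pow_right two_pos (Nat.le_add_right m n)
  zify [this]
  exact hbound

/-- Setting as in Statement 13, with `V₀` the size-`m` partite set
(the left summand) and `k₀ = max { j : u j ∈ V₀ }`: if `r i ≤ 0` for every index `i`
with `u i ∈ V₀ \ {u k₀}`, then `f(K_{1(n),m}) ≤ 2^{m+n} − 2^m + 1`. -/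
theorem stmt_14 (m n : ℕ) (hm : 2 ≤ m) (hn : 2 ≤ n)
    (f : Fin m ⊕ Fin n → ℕ) (hf : IsICColoring (K1nm m n) f)
    (hmax : ∑ v, f v = ICIndex (K1nm m n))
    (u : ℕ → Fin m ⊕ Fin n) (hu : Set.BijOn u (Set.Icc 1 (m + n)) Set.univ)
    (hmono : ∀ i, 1 ≤ i → i + 1 ≤ m + n → f (u i) < f (u (i + 1)))
    (s r : ℕ → ℤ) (hs0 : s 0 = 0)
    (hs : ∀ i, 1 ≤ i → i ≤ m + n → s i = f (u i))
    (hr : ∀ i, 1 ≤ i → i ≤ m + n → r i = s i - ∑ j ∈ Finset.range i, s j)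
    (k₀ : ℕ) (hk₀mem : 1 ≤ k₀ ∧ k₀ ≤ m + n ∧ (u k₀).isLeft = true)
    (hk₀max : ∀ j, 1 ≤ j → j ≤ m + n → (u j).isLeft = true → j ≤ k₀)
    (hneg : ∀ i, 1 ≤ i → i ≤ m + n → (u i).isLeft = true → i ≠ k₀ → r i ≤ 0) :
    ∑ v, f v ≤ 2 ^ (m + n) - 2 ^ m + 1 :=
  stmt_14_general m n f hf u hu hmono s r hs0 hs hr k₀ hk₀mem hk₀max hneg
end
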